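/- Let G be a connected simple graph of order n with diam(G) = 2 and β(G) = n − 3, with twin graph G*, and let v be a vertex of G such that Γ_2^*(v^*) ≠ ∅ and Γ_1(v) is homogeneous. If Γ_2(v) is homogeneous and |Γ_2^*(v^*)| = 3, then there is exactly one vertex a* ∈ Γ_2^*(v^*) such that a* is adjacent (in G*) to all vertices of R_1^*(v^*). -/

import Mathlib

/-!
Let `a, b, c` represent the three classes of `Γ₂*(v*)`. The `n - 4` vertices outside
`{v, a, b, c}` do not resolve `G`, so two of `v, a, b, c` have the same neighbours outside
this set. Two of `a, b, c` cannot: `Γ₂(v)` is homogeneous, so they would be twins. Hence one of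
them, say `a`, is adjacent to all of `Γ₁(v)`, and then `a*` is adjacent to all of `R₁*(v*)`.
Conversely, a class adjacent to all of `R₁*(v*)` has its members adjacent to all of `Γ₁(v)`,
and since `diam G = 2` and `Γ₂(v)` is homogeneous, two vertices of `Γ₂(v)` adjacent to all of
`Γ₁(v)` are twins.
-/

namespace PaperMetricDim

open SimpleGraph

variable {V : Type*}

/-- A set `W` of vertices resolves the graph `G`: any two distinct vertices have
different distance to some vertex of `W`. -/
def Resolves (G : SimpleGraph V) (W : Set V) : Prop :=
  ∀ u v : V, u ≠ v → ∃ w ∈ W, G.dist u w ≠ G.dist v w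

/-- The metric dimension of `G`: the minimum cardinality of a resolving set. -/
noncomputable def metricDim (G : SimpleGraph V) : ℕ :=
  sInf {k : ℕ | ∃ W : Set V, Resolves G W ∧ W.ncard = k}

/-- `G` is connected and has diameter exactly `d`. -/
def diamEq (G : SimpleGraph V) (d : ℕ) : Prop :=
  G.Connected ∧ (∀ u v : V, G.dist u v ≤ d) ∧ ∃ u v : V, G.dist u v = d

/-- A set of vertices is homogeneous if it induces a complete or an empty subgraph. -/
def Homogeneous (G : SimpleGraph V) (S : Set V) : Prop :=
  (∀ a ∈ S, ∀ b ∈ S, a ≠ b → G.Adj a b) ∨ (∀ a ∈ S, ∀ b ∈ S, ¬ G.Adj a b)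

/-- Two distinct vertices are twins: they have the same neighbours apart from
each other. -/
def Twins (G : SimpleGraph V) (u v : V) : Prop :=
  u ≠ v ∧ G.neighborSet u \ {v} = G.neighborSet v \ {u}

/-- The twin equivalence relation: equal or twins. -/
def twinRel (G : SimpleGraph V) (u v : V) : Prop := u = v ∨ Twins G u v

/-- The twin class of a vertex. -/
def twinClass (G : SimpleGraph V) (v : V) : Set V := {u : V | twinRel G v u}

/-- The vertices of the twin graph: twin equivalence classes. -/
def TwinVertex (G : SimpleGraph V) : Type _ := {S : Set V // ∃ v : V, S = twinClass G v}

/-- The twin graph `G*` of `G`: twin classes, two distinct classes being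
adjacent iff (some, equivalently all) representatives are adjacent in `G`. -/
def twinGraph (G : SimpleGraph V) : SimpleGraph (TwinVertex G) where
  Adj A B := A ≠ B ∧ ∃ a ∈ A.1, ∃ b ∈ B.1, G.Adj a b
  symm := by
    constructor
    rintro A B ⟨hne, a, ha, b, hb, hab⟩
    exact ⟨hne.symm, b, hb, a, ha, hab.symm⟩
  loopless := by constructor; rintro A ⟨hne, -⟩; exact hne rfl

/-- The twin class of `v`, as a vertex of the twin graph. -/
def cls (G : SimpleGraph V) (v : V) : TwinVertex G := ⟨twinClass G v, v, rfl⟩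

/-- A twin-graph vertex of type (1): a singleton class. -/
def typeOne (G : SimpleGraph V) (A : TwinVertex G) : Prop := ∃ v : V, A.1 = {v}

/-- A twin-graph vertex of type (K): a class with at least two vertices inducing
a complete subgraph. -/
def typeK (G : SimpleGraph V) (A : TwinVertex G) : Prop :=
  A.1.Nontrivial ∧ ∀ a ∈ A.1, ∀ b ∈ A.1, a ≠ b → G.Adj a b

/-- A twin-graph vertex of type (N): a class with at least two vertices inducing
an empty subgraph. -/
def typeN (G : SimpleGraph V) (A : TwinVertex G) : Prop :=
  A.1.Nontrivial ∧ ∀ a ∈ A.1, ∀ b ∈ A.1, ¬ G.Adj a b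

/-- Type (1K): type (1) or type (K). -/
def type1K (G : SimpleGraph V) (A : TwinVertex G) : Prop := typeOne G A ∨ typeK G A

/-- Type (1N): type (1) or type (N). -/
def type1N (G : SimpleGraph V) (A : TwinVertex G) : Prop := typeOne G A ∨ typeN G A

/-- Type (KN): type (K) or type (N). -/
def typeKN (G : SimpleGraph V) (A : TwinVertex G) : Prop := typeK G A ∨ typeN G A

/-- `Γ_i(v)`: the set of vertices at distance `i` from `v`. -/
def Gamma (G : SimpleGraph V) (i : ℕ) (v : V) : Set V := {u : V | G.dist u v = i}

/-- `Γ_i^*(v^*)`: the set of twin-graph vertices at distance `i` from `v^*`. -/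
def GammaStar (G : SimpleGraph V) (i : ℕ) (v : V) : Set (TwinVertex G) :=
  {A : TwinVertex G | (twinGraph G).dist A (cls G v) = i}

/-- `R_1(v)`: neighbours of `v` having a neighbour at distance 2 from `v`. -/
def R1 (G : SimpleGraph V) (v : V) : Set V :=
  {x ∈ Gamma G 1 v | ∃ y ∈ Gamma G 2 v, G.Adj x y}

/-- `R_2(v) = Γ_1(v) \ R_1(v)`. -/
def R2 (G : SimpleGraph V) (v : V) : Set V := Gamma G 1 v \ R1 G v

/-- `R_1^*(v^*)`: twin-graph neighbours of `v^*` having a neighbour in `Γ_2^*(v^*)`. -/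
def R1Star (G : SimpleGraph V) (v : V) : Set (TwinVertex G) :=
  {A ∈ GammaStar G 1 v | ∃ B ∈ GammaStar G 2 v, (twinGraph G).Adj A B}

/-- `R_2^*(v^*) = Γ_1^*(v^*) \ R_1^*(v^*)`. -/
def R2Star (G : SimpleGraph V) (v : V) : Set (TwinVertex G) :=
  GammaStar G 1 v \ R1Star G v

/-- `M_1(x) = Γ_1(v) ∩ Γ_1(x)` (for `x ∈ Γ_1(v)`). -/
def M1 (G : SimpleGraph V) (v x : V) : Set V := Gamma G 1 v ∩ Gamma G 1 x

/-- `M_2(x) = Γ_1(v) ∩ Γ_2(x)` (for `x ∈ Γ_1(v)`). -/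
def M2 (G : SimpleGraph V) (v x : V) : Set V := Gamma G 1 v ∩ Gamma G 2 x

/-- Structure `G_1`: the twin graph is `K_3` and has at most one vertex of type (1K). -/
def structG1 (G : SimpleGraph V) : Prop :=
  ∃ a b c : TwinVertex G, a ≠ b ∧ a ≠ c ∧ b ≠ c ∧
    (∀ X : TwinVertex G, X = a ∨ X = b ∨ X = c) ∧
    (twinGraph G).Adj a b ∧ (twinGraph G).Adj a c ∧ (twinGraph G).Adj b c ∧
    (∀ X Y : TwinVertex G, type1K G X → type1K G Y → X = Y)

/-- Structure `G_2`: the twin graph is the path `P_3` with (a) centre of type (N)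
and some leaf of type (K), or (b) one leaf of type (K) and the other of type (KN). -/
def structG2 (G : SimpleGraph V) : Prop :=
  ∃ a b c : TwinVertex G, a ≠ b ∧ a ≠ c ∧ b ≠ c ∧
    (∀ X : TwinVertex G, X = a ∨ X = b ∨ X = c) ∧
    (twinGraph G).Adj a b ∧ (twinGraph G).Adj b c ∧ ¬ (twinGraph G).Adj a c ∧
    ((typeN G b ∧ (typeK G a ∨ typeK G c)) ∨
     (typeK G a ∧ typeKN G c) ∨ (typeK G c ∧ typeKN G a))

/-- Structure `G_3`: the twin graph is the paw, the triangle being `u, p, q` with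
the pendant vertex `l` attached to `u`; `p` is of type (N), `q` of type (1K),
`l` of type (1N); and if `q` is of type (K) then neither `l` nor `u` is of type (N). -/
def structG3 (G : SimpleGraph V) : Prop :=
  ∃ u p q l : TwinVertex G,
    u ≠ p ∧ u ≠ q ∧ u ≠ l ∧ p ≠ q ∧ p ≠ l ∧ q ≠ l ∧
    (∀ X : TwinVertex G, X = u ∨ X = p ∨ X = q ∨ X = l) ∧
    (twinGraph G).Adj u p ∧ (twinGraph G).Adj u q ∧ (twinGraph G).Adj p q ∧
    (twinGraph G).Adj u l ∧ ¬ (twinGraph G).Adj p l ∧ ¬ (twinGraph G).Adj q l ∧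
    typeN G p ∧ type1K G q ∧ type1N G l ∧
    (typeK G q → ¬ typeN G l ∧ ¬ typeN G u)

/-- Structure `G_4`: the twin graph is the cycle `C_5` and every vertex is of type (1). -/
def structG4 (G : SimpleGraph V) : Prop :=
  ∃ v0 v1 v2 v3 v4 : TwinVertex G,
    v0 ≠ v1 ∧ v0 ≠ v2 ∧ v0 ≠ v3 ∧ v0 ≠ v4 ∧ v1 ≠ v2 ∧ v1 ≠ v3 ∧ v1 ≠ v4 ∧
    v2 ≠ v3 ∧ v2 ≠ v4 ∧ v3 ≠ v4 ∧
    (∀ X : TwinVertex G, X = v0 ∨ X = v1 ∨ X = v2 ∨ X = v3 ∨ X = v4) ∧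
    (twinGraph G).Adj v0 v1 ∧ (twinGraph G).Adj v1 v2 ∧ (twinGraph G).Adj v2 v3 ∧
    (twinGraph G).Adj v3 v4 ∧ (twinGraph G).Adj v4 v0 ∧
    ¬ (twinGraph G).Adj v0 v2 ∧ ¬ (twinGraph G).Adj v1 v3 ∧ ¬ (twinGraph G).Adj v2 v4 ∧
    ¬ (twinGraph G).Adj v3 v0 ∧ ¬ (twinGraph G).Adj v4 v1 ∧
    (∀ X : TwinVertex G, typeOne G X)

/-- Structure `G_5`: the twin graph is `C_5` with one chord (cycle `v0 v1 v2 v3 v4`,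
chord `v0 v2`); the two adjacent degree-2 vertices `v3, v4` are of type (1), the
other vertices of type (1K). -/
def structG5 (G : SimpleGraph V) : Prop :=
  ∃ v0 v1 v2 v3 v4 : TwinVertex G,
    v0 ≠ v1 ∧ v0 ≠ v2 ∧ v0 ≠ v3 ∧ v0 ≠ v4 ∧ v1 ≠ v2 ∧ v1 ≠ v3 ∧ v1 ≠ v4 ∧
    v2 ≠ v3 ∧ v2 ≠ v4 ∧ v3 ≠ v4 ∧
    (∀ X : TwinVertex G, X = v0 ∨ X = v1 ∨ X = v2 ∨ X = v3 ∨ X = v4) ∧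
    (twinGraph G).Adj v0 v1 ∧ (twinGraph G).Adj v1 v2 ∧ (twinGraph G).Adj v2 v3 ∧
    (twinGraph G).Adj v3 v4 ∧ (twinGraph G).Adj v4 v0 ∧ (twinGraph G).Adj v0 v2 ∧
    ¬ (twinGraph G).Adj v1 v3 ∧ ¬ (twinGraph G).Adj v1 v4 ∧ ¬ (twinGraph G).Adj v2 v4 ∧
    typeOne G v3 ∧ typeOne G v4 ∧ type1K G v0 ∧ type1K G v1 ∧ type1K G v2

/-- Structure `G_6`: the twin graph is `C_5` with two adjacent chords (cycle
`v0 v1 v2 v3 v4`, chords `v0 v2` and `v0 v3`, so `v0` has degree 4); `v0` is of any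
type, the other vertices of type (1K); no two non-adjacent vertices are both of
type (K), and no two adjacent vertices have the different types (K) and (N). -/
def structG6 (G : SimpleGraph V) : Prop :=
  ∃ v0 v1 v2 v3 v4 : TwinVertex G,
    v0 ≠ v1 ∧ v0 ≠ v2 ∧ v0 ≠ v3 ∧ v0 ≠ v4 ∧ v1 ≠ v2 ∧ v1 ≠ v3 ∧ v1 ≠ v4 ∧
    v2 ≠ v3 ∧ v2 ≠ v4 ∧ v3 ≠ v4 ∧
    (∀ X : TwinVertex G, X = v0 ∨ X = v1 ∨ X = v2 ∨ X = v3 ∨ X = v4) ∧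
    (twinGraph G).Adj v0 v1 ∧ (twinGraph G).Adj v1 v2 ∧ (twinGraph G).Adj v2 v3 ∧
    (twinGraph G).Adj v3 v4 ∧ (twinGraph G).Adj v4 v0 ∧ (twinGraph G).Adj v0 v2 ∧
    (twinGraph G).Adj v0 v3 ∧
    ¬ (twinGraph G).Adj v1 v3 ∧ ¬ (twinGraph G).Adj v1 v4 ∧ ¬ (twinGraph G).Adj v2 v4 ∧
    type1K G v1 ∧ type1K G v2 ∧ type1K G v3 ∧ type1K G v4 ∧
    (∀ X Y : TwinVertex G, X ≠ Y → ¬ (twinGraph G).Adj X Y →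
      ¬ (typeK G X ∧ typeK G Y)) ∧
    (∀ X Y : TwinVertex G, (twinGraph G).Adj X Y → ¬ (typeK G X ∧ typeN G Y))

/-- Structure `G_7`: the twin graph is the kite (`K_4` minus an edge, vertices
`a, b` of degree 3 in the kite and `c, d` the non-adjacent pair) with a pendant
vertex `l` attached to the degree-3 vertex `a`; `l` is of type (1), `a` and `b`
are of type (1K), one of `c, d` is of type (K) and the other of type (1). -/
def structG7 (G : SimpleGraph V) : Prop :=
  ∃ a b c d l : TwinVertex G,
    a ≠ b ∧ a ≠ c ∧ a ≠ d ∧ a ≠ l ∧ b ≠ c ∧ b ≠ d ∧ b ≠ l ∧ c ≠ d ∧ c ≠ l ∧ d ≠ l ∧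
    (∀ X : TwinVertex G, X = a ∨ X = b ∨ X = c ∨ X = d ∨ X = l) ∧
    (twinGraph G).Adj a b ∧ (twinGraph G).Adj a c ∧ (twinGraph G).Adj a d ∧
    (twinGraph G).Adj b c ∧ (twinGraph G).Adj b d ∧ (twinGraph G).Adj a l ∧
    ¬ (twinGraph G).Adj c d ∧ ¬ (twinGraph G).Adj b l ∧ ¬ (twinGraph G).Adj c l ∧
    ¬ (twinGraph G).Adj d l ∧
    typeOne G l ∧ type1K G a ∧ type1K G b ∧ typeK G c ∧ typeOne G d

/-- Structure `G_8`: the twin graph is the kite (`K_4` minus an edge, `a, b` of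
degree 3 and `c, d` the non-adjacent degree-2 pair); one degree-2 vertex `c` is of
type (K) and the other `d` of type (1); one degree-3 vertex `a` is of type (N)
and the other `b` of type (1K). -/
def structG8 (G : SimpleGraph V) : Prop :=
  ∃ a b c d : TwinVertex G,
    a ≠ b ∧ a ≠ c ∧ a ≠ d ∧ b ≠ c ∧ b ≠ d ∧ c ≠ d ∧
    (∀ X : TwinVertex G, X = a ∨ X = b ∨ X = c ∨ X = d) ∧
    (twinGraph G).Adj a b ∧ (twinGraph G).Adj a c ∧ (twinGraph G).Adj a d ∧
    (twinGraph G).Adj b c ∧ (twinGraph G).Adj b d ∧ ¬ (twinGraph G).Adj c d ∧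
    typeN G a ∧ type1K G b ∧ typeK G c ∧ typeOne G d

/-- Structure `G_9`: the twin graph is `C_4`, two adjacent vertices of type (K)
and the other two of type (1). -/
def structG9 (G : SimpleGraph V) : Prop :=
  ∃ v0 v1 v2 v3 : TwinVertex G,
    v0 ≠ v1 ∧ v0 ≠ v2 ∧ v0 ≠ v3 ∧ v1 ≠ v2 ∧ v1 ≠ v3 ∧ v2 ≠ v3 ∧
    (∀ X : TwinVertex G, X = v0 ∨ X = v1 ∨ X = v2 ∨ X = v3) ∧
    (twinGraph G).Adj v0 v1 ∧ (twinGraph G).Adj v1 v2 ∧ (twinGraph G).Adj v2 v3 ∧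
    (twinGraph G).Adj v3 v0 ∧ ¬ (twinGraph G).Adj v0 v2 ∧ ¬ (twinGraph G).Adj v1 v3 ∧
    typeK G v0 ∧ typeK G v1 ∧ typeOne G v2 ∧ typeOne G v3

/-- Structure `G_10`: the twin graph is the wheel `C_4 ∨ K_1` (hub `h`, rim
`v0 v1 v2 v3`); two adjacent rim (degree-3) vertices `v0, v1` are of type (K), the
hub is of type (1K), and the other vertices of type (1). -/
def structG10 (G : SimpleGraph V) : Prop :=
  ∃ h v0 v1 v2 v3 : TwinVertex G,
    h ≠ v0 ∧ h ≠ v1 ∧ h ≠ v2 ∧ h ≠ v3 ∧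
    v0 ≠ v1 ∧ v0 ≠ v2 ∧ v0 ≠ v3 ∧ v1 ≠ v2 ∧ v1 ≠ v3 ∧ v2 ≠ v3 ∧
    (∀ X : TwinVertex G, X = h ∨ X = v0 ∨ X = v1 ∨ X = v2 ∨ X = v3) ∧
    (twinGraph G).Adj h v0 ∧ (twinGraph G).Adj h v1 ∧ (twinGraph G).Adj h v2 ∧
    (twinGraph G).Adj h v3 ∧
    (twinGraph G).Adj v0 v1 ∧ (twinGraph G).Adj v1 v2 ∧ (twinGraph G).Adj v2 v3 ∧
    (twinGraph G).Adj v3 v0 ∧ ¬ (twinGraph G).Adj v0 v2 ∧ ¬ (twinGraph G).Adj v1 v3 ∧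
    typeK G v0 ∧ typeK G v1 ∧ type1K G h ∧ typeOne G v2 ∧ typeOne G v3

section Twins

variable {G : SimpleGraph V}

theorem twinRel_iff {u w : V} :
    twinRel G u w ↔ ∀ x, x ≠ u → x ≠ w → (G.Adj u x ↔ G.Adj w x) := by
  constructor
  · rintro (rfl | ⟨-, h⟩) x hxu hxw
    · rfl
    · have hx := congrArg (x ∈ ·) h
      simpa [hxu, hxw] using hx
  · intro h
    by_cases huw : u = w
    · exact Or.inl huw
    refine Or.inr ⟨huw, Set.ext fun x => ?_⟩
    by_cases hxu : x = u
    · subst hxu; simp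
    by_cases hxw : x = w
    · subst hxw; simp
    simpa [hxu, hxw] using h x hxu hxw

theorem twinRel_equivalence : Equivalence (twinRel G) where
  refl _ := Or.inl rfl
  symm h := twinRel_iff.2 fun x hx hx' => (twinRel_iff.1 h x hx' hx).symm
  trans {u v w} h₁ h₂ := by
    rw [twinRel_iff] at h₁ h₂ ⊢
    intro x hxu hxw
    by_cases hxv : x = v
    · subst hxv
      by_cases huw : u = w
      · rw [huw]
      -- Both directions go round the triangle `u v w` through the edge `u w`.
      have hu := h₂ u (Ne.symm hxu) huw
      have hw := h₁ w (Ne.symm huw) (Ne.symm hxw)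
      simp only [G.adj_comm x] at hu hw ⊢
      tauto
    · exact (h₁ x hxu hxv).trans (h₂ x hxv hxw)

theorem adj_of_twinRel {p q x : V} (h : twinRel G p q) (hpx : G.Adj p x) (hxq : x ≠ q) :
    G.Adj q x :=
  (twinRel_iff.1 h x hpx.ne' hxq).1 hpx

theorem twinClass_eq_twinClass_iff {u w : V} :
    twinClass G u = twinClass G w ↔ twinRel G u w := by
  constructor
  · intro h
    have hw : w ∈ twinClass G w := twinRel_equivalence.refl w
    rw [← h] at hw
    exact hw
  · intro h
    ext x
    exact ⟨twinRel_equivalence.trans (twinRel_equivalence.symm h), twinRel_equivalence.trans h⟩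

theorem cls_eq_cls_iff {u w : V} : cls G u = cls G w ↔ twinRel G u w :=
  Subtype.ext_iff.trans twinClass_eq_twinClass_iff

theorem cls_ne_cls_of_adj_of_not_adj {p q x : V} (hpx : G.Adj p x) (hqx : ¬ G.Adj q x)
    (hxq : x ≠ q) : cls G p ≠ cls G q :=
  fun h => hqx (adj_of_twinRel (cls_eq_cls_iff.1 h) hpx hxq)

theorem twinGraph_adj_cls_iff {p q : V} :
    (twinGraph G).Adj (cls G p) (cls G q) ↔ ¬ twinRel G p q ∧ G.Adj p q := by
  constructor
  · rintro ⟨hne, a, hpa, b, hqb, hab⟩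
    have hpq : ¬ twinRel G p q := mt cls_eq_cls_iff.2 hne
    have hbp : b ≠ p := by
      rintro rfl
      exact hpq (twinRel_equivalence.symm hqb)
    have hpb := adj_of_twinRel (twinRel_equivalence.symm hpa) hab hbp
    have hqp := adj_of_twinRel (twinRel_equivalence.symm hqb) hpb.symm
      (fun h => hpq (h ▸ twinRel_equivalence.refl p))
    exact ⟨hpq, hqp.symm⟩
  · rintro ⟨hpq, hadj⟩
    exact ⟨mt cls_eq_cls_iff.1 hpq, p, twinRel_equivalence.refl p,
      q, twinRel_equivalence.refl q, hadj⟩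

noncomputable def TwinVertex.rep (A : TwinVertex G) : V := A.2.choose

@[simp]
theorem TwinVertex.cls_rep (A : TwinVertex G) : cls G A.rep = A :=
  Subtype.ext A.2.choose_spec.symm

theorem TwinVertex.rep_injective : Function.Injective (TwinVertex.rep (G := G)) :=
  fun A B h => by rw [← A.cls_rep, ← B.cls_rep, h]

end Twins

section Distance

variable {G : SimpleGraph V} {v : V}

theorem not_adj_of_mem_gamma_two {u : V} (hu : u ∈ Gamma G 2 v) : ¬ G.Adj u v := by
  intro h
  have : G.dist u v = 2 := hu
  rw [dist_eq_one_iff_adj.2 h] at this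
  omega

theorem ne_of_mem_gamma_two {u : V} (hu : u ∈ Gamma G 2 v) : u ≠ v := by
  rintro rfl
  have : G.dist u u = 2 := hu
  simp at this

theorem mem_gamma_two_of_ne_of_not_adj (hdiam : diamEq G 2) {u : V} (hne : u ≠ v)
    (hnadj : ¬ G.Adj u v) : u ∈ Gamma G 2 v := by
  have h0 : G.dist u v ≠ 0 := fun h => hne (hdiam.1.dist_eq_zero_iff.1 h)
  have h1 : G.dist u v ≠ 1 := fun h => hnadj (dist_eq_one_iff_adj.1 h)
  have h2 := hdiam.2.1 u v
  show G.dist u v = 2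
  omega

theorem cls_mem_gammaStar_one_iff {p : V} :
    cls G p ∈ GammaStar G 1 v ↔ ¬ twinRel G p v ∧ G.Adj p v :=
  dist_eq_one_iff_adj.trans twinGraph_adj_cls_iff

theorem mem_gamma_two_of_cls_mem_gammaStar_two (hdiam : diamEq G 2) {p : V}
    (hp : cls G p ∈ GammaStar G 2 v) : p ∈ Gamma G 2 v := by
  have hp' : (twinGraph G).dist (cls G p) (cls G v) = 2 := hp
  have htw : ¬ twinRel G p v := by
    intro h
    rw [cls_eq_cls_iff.2 h, dist_self] at hp'
    omega
  refine mem_gamma_two_of_ne_of_not_adj hdiam (fun h => htw (h ▸ Or.inl rfl)) fun hadj => ?_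
  have h1 : (twinGraph G).dist (cls G p) (cls G v) = 1 :=
    cls_mem_gammaStar_one_iff.2 ⟨htw, hadj⟩
  omega

theorem TwinVertex.rep_mem_gamma_two (hdiam : diamEq G 2) {A : TwinVertex G}
    (hA : A ∈ GammaStar G 2 v) : A.rep ∈ Gamma G 2 v :=
  mem_gamma_two_of_cls_mem_gammaStar_two hdiam (by rwa [A.cls_rep])

end Distance

section MetricDimension

variable {G : SimpleGraph V}

theorem not_resolves_of_ncard_lt_metricDim {W : Set V} (hW : W.ncard < metricDim G) :
    ¬ Resolves G W :=
  fun hres => hW.not_ge (Nat.sInf_le ⟨W, hres, rfl⟩)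

theorem exists_ne_forall_adj_iff_of_not_resolves_compl (hconn : G.Connected) {S : Set V}
    (hS : ¬ Resolves G Sᶜ) :
    ∃ u ∈ S, ∃ w ∈ S, u ≠ w ∧ ∀ x ∉ S, (G.Adj u x ↔ G.Adj w x) := by
  simp only [Resolves, not_forall, not_exists, not_and, not_not] at hS
  obtain ⟨u, w, hne, hdist⟩ := hS
  have hu : u ∈ S := by
    by_contra hu
    have h := hdist u hu
    rw [dist_self, eq_comm, hconn.dist_eq_zero_iff] at h
    exact hne h.symm
  have hw : w ∈ S := by
    by_contra hw
    have h := hdist w hw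
    rw [dist_self, hconn.dist_eq_zero_iff] at h
    exact hne h
  refine ⟨u, hu, w, hw, hne, fun x hx => ?_⟩
  rw [← dist_eq_one_iff_adj, ← dist_eq_one_iff_adj, hdist x hx]

end MetricDimension

section GammaTwo

variable {G : SimpleGraph V} {v : V}

theorem twinRel_of_forall_adj_iff_of_subset (hhom : Homogeneous G (Gamma G 2 v))
    {S : Set V} (hS : S ⊆ insert v (Gamma G 2 v)) {u w : V} (hu : u ∈ Gamma G 2 v)
    (hw : w ∈ Gamma G 2 v) (h : ∀ x ∉ S, (G.Adj u x ↔ G.Adj w x)) : twinRel G u w := by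
  refine twinRel_iff.2 fun x hxu hxw => ?_
  by_cases hx : x ∈ S
  · rcases hS hx with rfl | hx
    · exact iff_of_false (not_adj_of_mem_gamma_two hu) (not_adj_of_mem_gamma_two hw)
    rcases hhom with hK | hE
    · exact iff_of_true (hK u hu x hx hxu.symm) (hK w hw x hx hxw.symm)
    · exact iff_of_false (hE u hu x hx) (hE w hw x hx)
  · exact h x hx

theorem forall_adj_of_forall_adj_iff_of_subset {S : Set V}
    (hS : S ⊆ insert v (Gamma G 2 v)) {y : V} (h : ∀ x ∉ S, (G.Adj v x ↔ G.Adj y x)) :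
    ∀ x, G.Adj v x → G.Adj y x := by
  refine fun x hvx => (h x fun hx => ?_).1 hvx
  rcases hS hx with rfl | hx
  · exact G.loopless.irrefl _ hvx
  · exact not_adj_of_mem_gamma_two hx hvx.symm

theorem exists_forall_adj_of_not_resolves (hconn : G.Connected)
    (hhom : Homogeneous G (Gamma G 2 v)) {T : Set V} (hT : T ⊆ Gamma G 2 v)
    (hTtw : T.Pairwise fun p q => ¬ twinRel G p q) (hres : ¬ Resolves G (insert v T)ᶜ) :
    ∃ y ∈ T, ∀ x, G.Adj v x → G.Adj y x := by
  have hS : insert v T ⊆ insert v (Gamma G 2 v) := Set.insert_subset_insert hT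
  obtain ⟨u, hu, w, hw, hne, h⟩ := exists_ne_forall_adj_iff_of_not_resolves_compl hconn hres
  rcases hu with rfl | hu
  · exact ⟨w, hw.resolve_left hne.symm, forall_adj_of_forall_adj_iff_of_subset hS h⟩
  rcases hw with rfl | hw
  · exact ⟨u, hu, forall_adj_of_forall_adj_iff_of_subset hS fun x hx => (h x hx).symm⟩
  exact absurd (twinRel_of_forall_adj_iff_of_subset hhom hS (hT hu) (hT hw) h) (hTtw hu hw hne)

theorem twinRel_of_forall_adj (hdiam : diamEq G 2) (hhom : Homogeneous G (Gamma G 2 v))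
    {y z : V} (hy : y ∈ Gamma G 2 v) (hz : z ∈ Gamma G 2 v)
    (hyN : ∀ x, G.Adj v x → G.Adj y x) (hzN : ∀ x, G.Adj v x → G.Adj z x) :
    twinRel G y z := by
  suffices key : ∀ {p q : V}, p ∈ Gamma G 2 v → q ∈ Gamma G 2 v →
      (∀ x, G.Adj v x → G.Adj q x) → ∀ x, G.Adj p x → x ≠ q → G.Adj q x from
    twinRel_iff.2 fun x hxy hxz => ⟨fun h => key hy hz hzN x h hxz, fun h => key hz hy hyN x h hxy⟩
  intro p q hp hq hqN x hpx hxq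
  by_cases hvx : G.Adj v x
  · exact hqN x hvx
  have hxv : x ≠ v := by
    rintro rfl
    exact not_adj_of_mem_gamma_two hp hpx
  have hx := mem_gamma_two_of_ne_of_not_adj hdiam hxv fun h => hvx h.symm
  rcases hhom with hK | hE
  · exact hK q hq x hx hxq.symm
  · exact absurd hpx (hE p hp x hx)

theorem cls_adj_of_mem_R1Star {y : V} (hy : y ∈ Gamma G 2 v)
    (hyN : ∀ x, G.Adj v x → G.Adj y x) {B : TwinVertex G} (hB : B ∈ R1Star G v) :
    (twinGraph G).Adj (cls G y) B := by
  rw [← B.cls_rep] at hB ⊢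
  obtain ⟨-, hadj⟩ := cls_mem_gammaStar_one_iff.1 hB.1
  have hne := cls_ne_cls_of_adj_of_not_adj hadj (not_adj_of_mem_gamma_two hy)
    (ne_of_mem_gamma_two hy).symm
  exact twinGraph_adj_cls_iff.2 ⟨mt cls_eq_cls_iff.2 hne.symm, hyN _ hadj.symm⟩

theorem forall_adj_of_forall_cls_adj_R1Star {y z : V} (hY : cls G y ∈ GammaStar G 2 v)
    (hy : y ∈ Gamma G 2 v) (hyN : ∀ x, G.Adj v x → G.Adj y x)
    (hZ : ∀ B ∈ R1Star G v, (twinGraph G).Adj (cls G z) B) :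
    ∀ x, G.Adj v x → G.Adj z x := by
  intro x hvx
  have hyv := ne_of_mem_gamma_two hy
  have hxv : cls G x ≠ cls G v := cls_ne_cls_of_adj_of_not_adj (hyN x hvx).symm
    (fun h => not_adj_of_mem_gamma_two hy h.symm) hyv
  have hxy : cls G x ≠ cls G y :=
    cls_ne_cls_of_adj_of_not_adj hvx.symm (not_adj_of_mem_gamma_two hy) hyv.symm
  have hX : cls G x ∈ R1Star G v :=
    ⟨cls_mem_gammaStar_one_iff.2 ⟨mt cls_eq_cls_iff.2 hxv, hvx.symm⟩, cls G y, hY,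
      twinGraph_adj_cls_iff.2 ⟨mt cls_eq_cls_iff.2 hxy, (hyN x hvx).symm⟩⟩
  exact (twinGraph_adj_cls_iff.1 (hZ _ hX)).2

end GammaTwo

theorem unique_vertex_adjacent_to_all_R1Star_general
    {V : Type*} [Fintype V] (G : SimpleGraph V)
    (hdiam : diamEq G 2)
    (hbeta : metricDim G = Fintype.card V - 3)
    (v : V)
    (hhom2 : Homogeneous G (Gamma G 2 v))
    (h3 : (GammaStar G 2 v).ncard = 3) :
    ∃! A : TwinVertex G, A ∈ GammaStar G 2 v ∧
      ∀ B ∈ R1Star G v, (twinGraph G).Adj A B := by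
  set T := TwinVertex.rep '' GammaStar G 2 v
  have hT : T ⊆ Gamma G 2 v := Set.image_subset_iff.2 fun A hA => A.rep_mem_gamma_two hdiam hA
  have hTtw : T.Pairwise fun p q => ¬ twinRel G p q := by
    rintro _ ⟨A, -, rfl⟩ _ ⟨B, -, rfl⟩ hne h
    rw [← cls_eq_cls_iff, A.cls_rep, B.cls_rep] at h
    exact hne (congrArg _ h)
  have hcard : (insert v T).ncard = 4 := by
    rw [Set.ncard_insert_of_notMem fun hv => ne_of_mem_gamma_two (hT hv) rfl,
      Set.ncard_image_of_injective _ TwinVertex.rep_injective, h3]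
  have hres : ¬ Resolves G (insert v T)ᶜ := by
    apply not_resolves_of_ncard_lt_metricDim
    have := Set.ncard_add_ncard_compl (insert v T)
    rw [Nat.card_eq_fintype_card] at this
    omega
  obtain ⟨_, ⟨Y, hY, rfl⟩, hyN⟩ := exists_forall_adj_of_not_resolves hdiam.1 hhom2 hT hTtw hres
  have hy := Y.rep_mem_gamma_two hdiam hY
  refine ⟨Y, ⟨hY, fun B hB => Y.cls_rep ▸ cls_adj_of_mem_R1Star hy hyN hB⟩, ?_⟩
  rintro Z ⟨hZ, hZadj⟩
  rw [← Z.cls_rep, ← Y.cls_rep, cls_eq_cls_iff]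
  refine twinRel_of_forall_adj hdiam hhom2 (Z.rep_mem_gamma_two hdiam hZ) hy ?_ hyN
  exact forall_adj_of_forall_cls_adj_R1Star (by rwa [Y.cls_rep]) hy hyN (by rwa [Z.cls_rep])

/-- If `G` is connected of order `n`, `diam(G) = 2`, `β(G) = n - 3`, `v` is a
vertex with `Γ_2^*(v^*) ≠ ∅` and `Γ_1(v)` homogeneous, `Γ_2(v)` is homogeneous,
and `|Γ_2^*(v^*)| = 3`, then there is exactly one vertex of `Γ_2^*(v^*)` adjacent
in the twin graph to all vertices of `R_1^*(v^*)`. -/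
theorem unique_vertex_adjacent_to_all_R1Star
    {V : Type*} [Fintype V] (G : SimpleGraph V)
    (hdiam : diamEq G 2)
    (hbeta : metricDim G = Fintype.card V - 3)
    (v : V) (h2 : (GammaStar G 2 v).Nonempty)
    (hhom : Homogeneous G (Gamma G 1 v))
    (hhom2 : Homogeneous G (Gamma G 2 v))
    (h3 : (GammaStar G 2 v).ncard = 3) :
    ∃! A : TwinVertex G, A ∈ GammaStar G 2 v ∧
      ∀ B ∈ R1Star G v, (twinGraph G).Adj A B :=
  unique_vertex_adjacent_to_all_R1Star_general G hdiam hbeta v hhom2 h3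

end PaperMetricDim
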